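/- Fix integers n, j, m ≥ 1 with j ≤ n, a composition (n_1,…,n_j) of n into j positive parts, a real α < 1, and real weights V(n,k) with V(n,j) ≠ 0. Let 1 ≤ l ≤ m. Then the expected number of new blocks of size l under the conditional Gibbs sampling formula satisfies: ∑ w_l·Q(w) = binom(m,l)·((1−α)_{l−1}/V(n,j))·∑_{k=1}^{m−l+1} V(n+m,j+k)·S(m−l, k−1; α, −(n−jα)), where the sum ranges over all tuples (w_1,…,w_m) of nonnegative integers with ∑_{i=1}^{m} i·w_i ≤ m. -/

import Mathlib

/-- Rising factorial `(x)_n = x(x+1)⋯(x+n−1)`. -/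
noncomputable def risingFac (x : ℝ) (n : ℕ) : ℝ := ∏ i ∈ Finset.range n, (x + i)

/-- Rising factorial with increment `α`: `(x)_{n↑α} = ∏_{i<n} (x + iα)`. -/
noncomputable def risingFacInc (x α : ℝ) (n : ℕ) : ℝ := ∏ i ∈ Finset.range n, (x + i * α)

/-- Falling factorial `(x)_{[n]} = x(x−1)⋯(x−n+1)`. -/
noncomputable def fallingFac (x : ℝ) (n : ℕ) : ℝ := ∏ i ∈ Finset.range n, (x - i)

/-- Compositions of `n` into `k` positive parts, as functions `Fin k → ℕ`. -/
def compositions (n k : ℕ) : Finset (Fin k → ℕ) :=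
  (Fintype.piFinset fun _ => Finset.range (n + 1)).filter
    (fun f => (∀ i, 0 < f i) ∧ ∑ i, f i = n)

/-- Tuples of `k` nonnegative integers summing to `n`. -/
def weakCompositions (n k : ℕ) : Finset (Fin k → ℕ) :=
  (Fintype.piFinset fun _ => Finset.range (n + 1)).filter (fun f => ∑ i, f i = n)

/-- Generalized (central) Stirling number
`S(n,k;α) = (n!/k!) ∑_{(n_1,…,n_k)} ∏_j (1−α)_{n_j−1}/n_j!`,
the sum over compositions of `n` into `k` positive parts. -/
noncomputable def genStirling (α : ℝ) (n k : ℕ) : ℝ :=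
  (Nat.factorial n : ℝ) / (Nat.factorial k : ℝ) *
    ∑ f ∈ compositions n k, ∏ j, risingFac (1 - α) (f j - 1) / (Nat.factorial (f j) : ℝ)

/-- Non-central generalized Stirling number
`S(n,k;α,γ) = ∑_{s=k}^n C(n,s) S(s,k;α) (−γ)_{n−s}`. -/
noncomputable def genStirlingNC (α γ : ℝ) (n k : ℕ) : ℝ :=
  ∑ s ∈ Finset.Icc k n, (n.choose s : ℝ) * genStirling α s k * risingFac (-γ) (n - s)

/-- Vectors `(w_1,…,w_m)` of nonnegative integers with `∑ i·w_i ≤ m`,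
encoded as `w : Fin m → ℕ` where index `i` represents size `i+1`. -/
def condCountVectors (m : ℕ) : Finset (Fin m → ℕ) :=
  (Fintype.piFinset fun _ => Finset.range (m + 1)).filter
    (fun w => ∑ i, (i.1 + 1) * w i ≤ m)

/-- The conditional Gibbs sampling formula
`Q(w) = m!·(V(n+m,j+k)/V(n,j))·((n−jα)_{m−s}/(m−s)!)·
∏_i [(1−α)_{i−1}]^{w_i}/((i!)^{w_i} w_i!)`, where `s = ∑ i·w_i` and `k = ∑ w_i`. -/
noncomputable def condSampling (α : ℝ) (V : ℕ → ℕ → ℝ) (n j m : ℕ)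
    (w : Fin m → ℕ) : ℝ :=
  (Nat.factorial m : ℝ) * (V (n + m) (j + ∑ i, w i) / V n j) *
    (risingFac ((n : ℝ) - j * α) (m - ∑ i, (i.1 + 1) * w i) /
      (Nat.factorial (m - ∑ i, (i.1 + 1) * w i) : ℝ)) *
    ∏ i, (risingFac (1 - α) i.1) ^ (w i) /
      ((Nat.factorial (i.1 + 1) : ℝ) ^ (w i) * (Nat.factorial (w i) : ℝ))

/-!
Removing one block of size `l` (`w ↦ w - e_l`) turns `w_l · Q(w)` into `(1-α)_{l-1}/l!` times
the weight of a block-count vector of total size at most `m - l` with one block fewer. Grouped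
by total size `s` and number of blocks `k`, the weights `∏ c_i^{w_i} / w_i!` (with
`c_i = (1-α)_{i-1}/i!`) add up to `S(s,k;α)/s!`: multiplying by `k = ∑ w_i` and removing a
block again gives the same recursion as splitting off the first part of a composition.
Comparing the factorials with `binom(m,l)·binom(m-l,s)` gives the formula.
-/

open Finset

section BlockCounts

variable {m : ℕ}

def totalSize (w : Fin m → ℕ) : ℕ := ∑ i, (i.1 + 1) * w i

def numBlocks (w : Fin m → ℕ) : ℕ := ∑ i, w i

lemma mul_apply_le_totalSize (w : Fin m → ℕ) (a : Fin m) : (a.1 + 1) * w a ≤ totalSize w :=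
  single_le_sum (f := fun i : Fin m => (i.1 + 1) * w i) (fun _ _ => Nat.zero_le _) (mem_univ a)

lemma apply_le_totalSize (w : Fin m → ℕ) (a : Fin m) : w a ≤ totalSize w :=
  (Nat.le_mul_of_pos_left _ a.1.succ_pos).trans (mul_apply_le_totalSize w a)

lemma numBlocks_le_totalSize (w : Fin m → ℕ) : numBlocks w ≤ totalSize w :=
  sum_le_sum fun i _ => Nat.le_mul_of_pos_left _ i.1.succ_pos

lemma totalSize_add_single (w : Fin m → ℕ) (a : Fin m) :
    totalSize (w + Pi.single a 1) = totalSize w + (a.1 + 1) := by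
  simp [totalSize, mul_add, sum_add_distrib, Pi.single_apply]

lemma numBlocks_add_single (w : Fin m → ℕ) (a : Fin m) :
    numBlocks (w + Pi.single a 1) = numBlocks w + 1 := by
  simp [numBlocks, sum_add_distrib]

/-- Block-count vectors of the partitions of `s` into `k` blocks of sizes at most `m`:
`w i` is the number of blocks of size `i + 1`. -/
def blockCountVectors (m s k : ℕ) : Finset (Fin m → ℕ) :=
  (Fintype.piFinset fun _ => range (s + 1)).filter
    (fun w => totalSize w = s ∧ numBlocks w = k)

def blockCountVectorsLE (m M : ℕ) : Finset (Fin m → ℕ) :=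
  (Fintype.piFinset fun _ => range (M + 1)).filter (fun w => totalSize w ≤ M)

lemma mem_blockCountVectors {s k : ℕ} {w : Fin m → ℕ} :
    w ∈ blockCountVectors m s k ↔ totalSize w = s ∧ numBlocks w = k := by
  simp only [blockCountVectors, mem_filter, Fintype.mem_piFinset, mem_range,
    and_iff_right_iff_imp]
  rintro ⟨rfl, -⟩ i
  exact Nat.lt_succ_of_le (apply_le_totalSize w i)

lemma mem_blockCountVectorsLE {M : ℕ} {w : Fin m → ℕ} :
    w ∈ blockCountVectorsLE m M ↔ totalSize w ≤ M := by
  simp only [blockCountVectorsLE, mem_filter, Fintype.mem_piFinset, mem_range,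
    and_iff_right_iff_imp]
  exact fun h i => Nat.lt_succ_of_le ((apply_le_totalSize w i).trans h)

lemma sum_apply_mul_eq_sum_add_single {R : Type*} [Semiring R]
    {T T' : Finset (Fin m → ℕ)} (a : Fin m) (hT : ∀ w, w + Pi.single a 1 ∈ T ↔ w ∈ T')
    (F : (Fin m → ℕ) → R) :
    ∑ w ∈ T, (w a : R) * F w = ∑ w ∈ T', ((w a : R) + 1) * F (w + Pi.single a 1) := by
  have hmap : T'.map (addRightEmbedding (Pi.single a 1)) = T.filter (fun v => v a ≠ 0) := by
    ext v
    simp only [mem_map, addRightEmbedding_apply, mem_filter]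
    constructor
    · rintro ⟨w, hw, rfl⟩
      exact ⟨(hT w).2 hw, by simp⟩
    · rintro ⟨hv, hva⟩
      have hsub : v - Pi.single a 1 + Pi.single a 1 = v := by
        ext i
        rcases eq_or_ne i a with rfl | hi
        · simp [Nat.sub_add_cancel (Nat.pos_of_ne_zero hva)]
        · simp [hi]
      exact ⟨v - Pi.single a 1, (hT _).1 (hsub.symm ▸ hv), hsub⟩
  rw [← sum_filter_of_ne (p := fun v => v a ≠ 0) (fun v _ h hv => h (by simp [hv])), ← hmap,
    sum_map]
  simp

end BlockCounts

lemma mem_compositions {s k : ℕ} {f : Fin k → ℕ} :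
    f ∈ compositions s k ↔ (∀ i, 0 < f i) ∧ ∑ i, f i = s := by
  simp only [compositions, mem_filter, Fintype.mem_piFinset, mem_range, and_iff_right_iff_imp]
  rintro ⟨-, rfl⟩ i
  exact Nat.lt_succ_of_le (single_le_sum (fun _ _ => Nat.zero_le _) (mem_univ i))

section CompositionSum

variable {K : Type*} [CommSemiring K] (c : ℕ → K)

def compositionSum (s k : ℕ) : K := ∑ f ∈ compositions s k, ∏ i, c (f i)

lemma compositionSum_zero_right (s : ℕ) : compositionSum c s 0 = if s = 0 then 1 else 0 := by
  split_ifs with hs <;> simp [compositionSum, compositions, hs, eq_comm]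

lemma compositionSum_succ (s k : ℕ) :
    compositionSum c s (k + 1) =
      ∑ b ∈ range s, c (b + 1) * compositionSum c (s - (b + 1)) k := by
  simp_rw [compositionSum, mul_sum]
  rw [sum_sigma']
  symm
  refine sum_nbij' (fun p => Fin.cons (p.1 + 1) p.2) (fun f => ⟨f 0 - 1, Fin.tail f⟩)
    ?_ ?_ ?_ ?_ ?_
  · rintro ⟨b, g⟩ hp
    simp only [mem_sigma, mem_range, mem_compositions] at hp ⊢
    refine ⟨fun i => Fin.cases (Nat.succ_pos b) hp.2.1 i, ?_⟩
    rw [Fin.sum_cons]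
    omega
  · intro f hf
    obtain ⟨hpos, hsum⟩ := mem_compositions.1 hf
    rw [Fin.sum_univ_succ] at hsum
    simp only [mem_sigma, mem_range, mem_compositions]
    have := hpos 0
    refine ⟨by omega, fun i => hpos _, ?_⟩
    simp only [Fin.tail]
    omega
  · rintro ⟨b, g⟩ _
    simp
  · intro f hf
    have := (mem_compositions.1 hf).1 0
    simp only [Nat.sub_add_cancel this, Fin.cons_self_tail]
  · intro p _
    simp [Fin.prod_univ_succ]

lemma compositionSum_eq_zero_of_lt {s k : ℕ} (h : s < k) : compositionSum c s k = 0 := by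
  refine sum_eq_zero fun f hf => absurd h (not_lt.2 ?_)
  obtain ⟨hpos, rfl⟩ := mem_compositions.1 hf
  simpa using sum_le_sum fun i (_ : i ∈ univ) => Nat.succ_le_of_lt (hpos i)

end CompositionSum

section CountWeight

variable {K : Type*} [Field K] (c : ℕ → K) {m : ℕ}

def countWeight (w : Fin m → ℕ) : K := ∏ i, c (i.1 + 1) ^ w i / (w i).factorial

/-- The partial Bell polynomial `B_{s,k}(1!·c 1, 2!·c 2, …) / s!` when `s ≤ m`. -/
def countWeightSum (m s k : ℕ) : K := ∑ w ∈ blockCountVectors m s k, countWeight c w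

lemma apply_add_one_mul_countWeight_add_single [CharZero K] (w : Fin m → ℕ) (a : Fin m) :
    ((w a : K) + 1) * countWeight c (w + Pi.single a 1) = c (a.1 + 1) * countWeight c w := by
  have hterm : ∀ i, c (i.1 + 1) ^ (w + Pi.single a 1 : Fin m → ℕ) i /
        ((w + Pi.single a 1 : Fin m → ℕ) i).factorial =
      c (i.1 + 1) ^ w i / (w i).factorial * if i = a then c (a.1 + 1) / ((w a : K) + 1) else 1 := by
    intro i
    rcases eq_or_ne i a with rfl | hi
    · have := Nat.cast_add_one_ne_zero (R := K) (w i)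
      simp [pow_succ, Nat.factorial_succ]
      field_simp
    · simp [hi]
  rw [countWeight, Fintype.prod_congr _ _ hterm, prod_mul_distrib, prod_ite_eq' univ a,
    if_pos (mem_univ a), countWeight]
  have := Nat.cast_add_one_ne_zero (R := K) (w a)
  field_simp

lemma sum_apply_mul_countWeight [CharZero K] (a : Fin m) (s k : ℕ) :
    ∑ w ∈ blockCountVectors m s (k + 1), (w a : K) * countWeight c w =
      if a.1 < s then c (a.1 + 1) * countWeightSum c m (s - (a.1 + 1)) k else 0 := by
  split_ifs with has
  · obtain ⟨t, rfl⟩ : ∃ t, s = t + (a.1 + 1) := ⟨s - (a.1 + 1), by omega⟩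
    rw [sum_apply_mul_eq_sum_add_single a (T' := blockCountVectors m t k) (fun w => by
      simp [mem_blockCountVectors, totalSize_add_single, numBlocks_add_single])]
    simp_rw [apply_add_one_mul_countWeight_add_single, Nat.add_sub_cancel, countWeightSum, mul_sum]
  · refine sum_eq_zero fun w hw => ?_
    have hwa : w a = 0 := by
      by_contra hwa
      have := (Nat.le_mul_of_pos_right _ (Nat.pos_of_ne_zero hwa)).trans
        (mul_apply_le_totalSize w a)
      rw [(mem_blockCountVectors.1 hw).1] at this
      omega
    simp [hwa]

lemma succ_mul_countWeightSum_succ [CharZero K] {s : ℕ} (hs : s ≤ m) (k : ℕ) :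
    ((k : K) + 1) * countWeightSum c m s (k + 1) =
      ∑ b ∈ range s, c (b + 1) * countWeightSum c m (s - (b + 1)) k := by
  have hsplit : ∀ w ∈ blockCountVectors m s (k + 1),
      ((k : K) + 1) * countWeight c w = ∑ a, (w a : K) * countWeight c w := by
    intro w hw
    have hk := (mem_blockCountVectors.1 hw).2
    rw [numBlocks] at hk
    rw [← sum_mul, ← Nat.cast_sum, hk, Nat.cast_succ]
  rw [countWeightSum, mul_sum, sum_congr rfl hsplit, sum_comm]
  simp_rw [sum_apply_mul_countWeight]
  rw [Fin.sum_univ_eq_sum_range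
    (fun b => if b < s then c (b + 1) * countWeightSum c m (s - (b + 1)) k else 0), ← sum_filter]
  congr 1
  ext b
  simp only [mem_filter, mem_range]
  omega

lemma countWeightSum_zero_right (s : ℕ) :
    countWeightSum c m s 0 = if s = 0 then 1 else 0 := by
  have hmem : ∀ w : Fin m → ℕ, w ∈ blockCountVectors m s 0 ↔ s = 0 ∧ w = 0 := by
    intro w
    have hzero : numBlocks w = 0 ↔ w = 0 := by simp [numBlocks, sum_eq_zero_iff, funext_iff]
    rw [mem_blockCountVectors, hzero]
    constructor <;> rintro ⟨h, rfl⟩ <;> simp_all [totalSize]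
  split_ifs with hs
  · subst hs
    rw [countWeightSum, show blockCountVectors m 0 0 = {0} by ext w; simp [hmem]]
    simp [countWeight]
  · rw [countWeightSum, show blockCountVectors m s 0 = ∅ by ext w; simp [hmem, hs], sum_empty]

lemma factorial_mul_countWeightSum [CharZero K] {s : ℕ} (hs : s ≤ m) (k : ℕ) :
    (k.factorial : K) * countWeightSum c m s k = compositionSum c s k := by
  induction k generalizing s with
  | zero => simp [countWeightSum_zero_right, compositionSum_zero_right]
  | succ k ih =>
    calc ((k + 1).factorial : K) * countWeightSum c m s (k + 1)
        = k.factorial * (((k : K) + 1) * countWeightSum c m s (k + 1)) := by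
          push_cast [Nat.factorial_succ]
          ring
      _ = ∑ b ∈ range s, c (b + 1) * (k.factorial * countWeightSum c m (s - (b + 1)) k) := by
          rw [succ_mul_countWeightSum_succ c hs, mul_sum]
          exact sum_congr rfl fun _ _ => mul_left_comm _ _ _
      _ = compositionSum c s (k + 1) := by
          rw [compositionSum_succ]
          exact sum_congr rfl fun b _ => by rw [ih (by omega)]

lemma sum_blockCountVectorsLE (M : ℕ) (H : ℕ → ℕ → K) :
    ∑ w ∈ blockCountVectorsLE m M, H (totalSize w) (numBlocks w) * countWeight c w =
      ∑ s ∈ range (M + 1), ∑ k ∈ range (M + 1), H s k * countWeightSum c m s k := by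
  have hmaps : ∀ w ∈ blockCountVectorsLE m M,
      (totalSize w, numBlocks w) ∈ range (M + 1) ×ˢ range (M + 1) := by
    intro w hw
    have hle := mem_blockCountVectorsLE.1 hw
    have := numBlocks_le_totalSize w
    simp only [mem_product, mem_range]
    omega
  rw [← sum_product', ← sum_fiberwise_of_maps_to hmaps]
  refine sum_congr rfl fun p hp => ?_
  have hfiber : (blockCountVectorsLE m M).filter (fun w => (totalSize w, numBlocks w) = p) =
      blockCountVectors m p.1 p.2 := by
    ext w
    have := (mem_product.1 hp).1
    simp only [mem_filter, mem_blockCountVectorsLE, mem_blockCountVectors, Prod.ext_iff,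
      mem_range] at this ⊢
    omega
  rw [hfiber, countWeightSum, mul_sum]
  exact sum_congr rfl fun w hw => by
    rw [(mem_blockCountVectors.1 hw).1, (mem_blockCountVectors.1 hw).2]

lemma sum_apply_mul_countWeight_blockCountVectorsLE [CharZero K] (a : Fin m) {M : ℕ}
    (hM : M ≤ m) (H : ℕ → ℕ → K) :
    ∑ w ∈ blockCountVectorsLE m (M + (a.1 + 1)),
        (w a : K) * (H (totalSize w) (numBlocks w) * countWeight c w) =
      c (a.1 + 1) * ∑ s ∈ range (M + 1), ∑ k ∈ range (M + 1),
        H (s + (a.1 + 1)) (k + 1) * (compositionSum c s k / k.factorial) := by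
  rw [sum_apply_mul_eq_sum_add_single a (T' := blockCountVectorsLE m M) (fun w => by
    simp [mem_blockCountVectorsLE, totalSize_add_single])]
  simp_rw [totalSize_add_single, numBlocks_add_single, mul_left_comm _ (H _ _),
    apply_add_one_mul_countWeight_add_single, mul_left_comm _ (c _), ← mul_sum]
  rw [sum_blockCountVectorsLE c M fun s k => H (s + (a.1 + 1)) (k + 1)]
  congr 1
  refine sum_congr rfl fun s hs => sum_congr rfl fun k _ => ?_
  rw [← factorial_mul_countWeightSum c (m := m) (by simp at hs; omega),
    mul_div_cancel_left₀ _ (Nat.cast_ne_zero.2 k.factorial_ne_zero)]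

end CountWeight

noncomputable def gibbsBlockWeight (α : ℝ) (i : ℕ) : ℝ :=
  risingFac (1 - α) (i - 1) / i.factorial

lemma sum_Icc_one_eq_sum_range {M : Type*} [AddCommMonoid M] (f : ℕ → M) (N : ℕ) :
    ∑ k ∈ Icc 1 (N + 1), f k = ∑ k ∈ range (N + 1), f (k + 1) := by
  rw [Nat.range_succ_eq_Icc_zero, ← zero_add 1, ← map_add_right_Icc, sum_map]
  rfl

lemma genStirling_eq_compositionSum (α : ℝ) (s k : ℕ) :
    genStirling α s k = s.factorial / k.factorial * compositionSum (gibbsBlockWeight α) s k := rfl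

lemma genStirlingNC_eq_sum_range (α γ : ℝ) (N k : ℕ) :
    genStirlingNC α γ N k = ∑ s ∈ range (N + 1),
      (N.choose s : ℝ) * genStirling α s k * risingFac (-γ) (N - s) := by
  rw [genStirlingNC, Nat.range_succ_eq_Icc_zero]
  refine sum_subset (Icc_subset_Icc (Nat.zero_le k) le_rfl) fun s hs hsk => ?_
  rw [genStirling_eq_compositionSum, compositionSum_eq_zero_of_lt _ (by simp at hs hsk; omega)]
  ring

lemma condSampling_eq (α : ℝ) (V : ℕ → ℕ → ℝ) (n j m : ℕ) (w : Fin m → ℕ) :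
    condSampling α V n j m w = m.factorial / V n j *
      (V (n + m) (j + numBlocks w) * (risingFac ((n : ℝ) - j * α) (m - totalSize w) /
        (m - totalSize w).factorial) * countWeight (gibbsBlockWeight α) w) := by
  simp only [condSampling, countWeight, gibbsBlockWeight, totalSize, numBlocks,
    Nat.add_sub_cancel, div_pow, div_div]
  ring

/-- Expected number of new blocks of size `l` under the conditional Gibbs
sampling formula. -/
theorem condSampling_expected_size_l (n j m : ℕ)
    (α : ℝ) (V : ℕ → ℕ → ℝ)
    (l : ℕ) (hl : 1 ≤ l) (hlm : l ≤ m) :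
    ∑ w ∈ condCountVectors m,
        ((w ⟨l - 1, by omega⟩ : ℕ) : ℝ) * condSampling α V n j m w =
      (m.choose l : ℝ) * (risingFac (1 - α) (l - 1) / V n j) *
        ∑ k ∈ Finset.Icc 1 (m - l + 1),
          V (n + m) (j + k) *
            genStirlingNC α (-((n : ℝ) - j * α)) (m - l) (k - 1) := by
  set a : Fin m := ⟨l - 1, by omega⟩
  have ha : a.1 + 1 = l := Nat.sub_add_cancel hl
  set R : ℝ := (n : ℝ) - j * α
  have hvectors : condCountVectors m = blockCountVectorsLE m ((m - l) + (a.1 + 1)) := by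
    rw [ha, Nat.sub_add_cancel hlm]
    rfl
  rw [hvectors, sum_congr rfl fun w _ => by rw [condSampling_eq, mul_left_comm], ← mul_sum,
    sum_apply_mul_countWeight_blockCountVectorsLE _ a (Nat.sub_le m l)
      (fun s k => V (n + m) (j + k) * (risingFac R (m - s) / (m - s).factorial))]
  simp_rw [sum_Icc_one_eq_sum_range, Nat.add_sub_cancel, genStirlingNC_eq_sum_range, neg_neg,
    mul_sum, ha]
  rw [sum_comm]
  refine sum_congr rfl fun k _ => sum_congr rfl fun s hs => ?_
  have hs : s ≤ m - l := Nat.lt_succ_iff.1 (mem_range.1 hs)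
  rw [genStirling_eq_compositionSum, gibbsBlockWeight, Nat.cast_choose ℝ hlm,
    Nat.cast_choose ℝ hs, show m - (s + l) = m - l - s by omega]
  have : ∀ i : ℕ, (i.factorial : ℝ) ≠ 0 := fun i => Nat.cast_ne_zero.2 i.factorial_ne_zero
  field_simp
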